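/- For complex numbers $a, z, q$ with $|q| < 1$ and $|z| < 1$, the $q$-binomial theorem holds: $\sum_{k=0}^\infty \frac{(a;q)_k}{(q;q)_k} z^k = \frac{(az;q)_\infty}{(z;q)_\infty}$. -/

import Mathlib

noncomputable def qPoch (a q : ℂ) (n : ℕ) : ℂ := ∏ j ∈ Finset.range n, (1 - a * q ^ j)

noncomputable def qPochInf (a q : ℂ) : ℂ := ∏' j : ℕ, (1 - a * q ^ j)

/-!
Write `G(w) = ∑ₖ (a;q)ₖ/(q;q)ₖ wᵏ`. Comparing coefficients gives the functional
equation `(1 - w) G(w) = (1 - a w) G(q w)`, which iterates to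
`(z;q)ₙ G(z) = (az;q)ₙ G(qⁿ z)`. As `n → ∞`, `G(qⁿ z) → G(0) = 1` by dominated
convergence, and `(z;q)_∞ ≠ 0` for `|z| < 1`.
-/

open Filter Topology

theorem summable_norm_of_ratio_tendsto {𝕜 : Type*} [NormedField 𝕜] {f ρ : ℕ → 𝕜}
    {l : 𝕜} (hf : ∀ n, f (n + 1) = ρ n * f n) (hρ : Tendsto ρ atTop (𝓝 l)) (hl : ‖l‖ < 1) :
    Summable fun n ↦ ‖f n‖ := by
  obtain ⟨r, hlr, hr⟩ := exists_between hl
  refine summable_of_ratio_norm_eventually_le hr ?_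
  filter_upwards [hρ.norm.eventually_lt_const hlr] with n hn
  rw [hf, norm_norm, norm_norm, norm_mul]
  exact mul_le_mul_of_nonneg_right hn.le (norm_nonneg _)

section QPochhammer

variable {a q w : ℂ}

theorem qPoch_zero (a q : ℂ) : qPoch a q 0 = 1 := Finset.prod_range_zero _

theorem qPoch_succ (a q : ℂ) (n : ℕ) : qPoch a q (n + 1) = qPoch a q n * (1 - a * q ^ n) :=
  Finset.prod_range_succ _ _

theorem norm_mul_pow_lt_one (hq : ‖q‖ ≤ 1) (hw : ‖w‖ < 1) (j : ℕ) : ‖w * q ^ j‖ < 1 := by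
  rw [norm_mul, norm_pow]
  exact mul_lt_one_of_nonneg_of_lt_one_left (norm_nonneg w) hw
    (pow_le_one₀ (norm_nonneg q) hq)

theorem one_sub_ne_zero_of_norm_lt_one (hw : ‖w‖ < 1) : 1 - w ≠ 0 := by
  rw [sub_ne_zero]
  rintro rfl
  simp at hw

theorem one_sub_pow_ne_zero (hq : ‖q‖ < 1) {n : ℕ} (hn : n ≠ 0) : 1 - q ^ n ≠ 0 :=
  one_sub_ne_zero_of_norm_lt_one (by rw [norm_pow]; exact pow_lt_one₀ (norm_nonneg q) hq hn)

theorem summable_norm_mul_pow (w : ℂ) (hq : ‖q‖ < 1) :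
    Summable fun j : ℕ ↦ ‖w * q ^ j‖ := by
  simpa only [norm_mul, norm_pow] using
    (summable_geometric_of_lt_one (norm_nonneg q) hq).mul_left ‖w‖

theorem multipliable_one_sub_mul_pow (w : ℂ) (hq : ‖q‖ < 1) :
    Multipliable fun j : ℕ ↦ 1 - w * q ^ j := by
  simpa only [sub_eq_add_neg] using
    multipliable_one_add_of_summable (f := fun j : ℕ ↦ -(w * q ^ j))
      (by simpa only [norm_neg] using summable_norm_mul_pow w hq)

theorem tendsto_qPoch_qPochInf (w : ℂ) (hq : ‖q‖ < 1) :
    Tendsto (qPoch w q) atTop (𝓝 (qPochInf w q)) :=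
  (multipliable_one_sub_mul_pow w hq).hasProd.tendsto_prod_nat

theorem qPochInf_ne_zero (hq : ‖q‖ < 1) (hw : ‖w‖ < 1) : qPochInf w q ≠ 0 := by
  simpa only [qPochInf, sub_eq_add_neg] using
    tprod_one_add_ne_zero_of_summable (f := fun j : ℕ ↦ -(w * q ^ j))
      (fun j ↦ by simpa only [← sub_eq_add_neg] using
        one_sub_ne_zero_of_norm_lt_one (norm_mul_pow_lt_one hq.le hw j))
      (by simpa only [norm_neg] using summable_norm_mul_pow w hq)

end QPochhammer

section QBinomialSeries

noncomputable def qBinomialTerm (a q w : ℂ) (k : ℕ) : ℂ := qPoch a q k / qPoch q q k * w ^ k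

noncomputable def qBinomialSeries (a q w : ℂ) : ℂ := ∑' k, qBinomialTerm a q w k

variable {a q w : ℂ}

theorem qBinomialTerm_zero (a q w : ℂ) : qBinomialTerm a q w 0 = 1 := by
  simp [qBinomialTerm, qPoch_zero]

theorem qBinomialTerm_succ (a q w : ℂ) (k : ℕ) :
    qBinomialTerm a q w (k + 1) =
      (1 - a * q ^ k) / (1 - q ^ (k + 1)) * w * qBinomialTerm a q w k := by
  rw [qBinomialTerm, qBinomialTerm, qPoch_succ, qPoch_succ, ← pow_succ', mul_div_mul_comm]
  ring

theorem qBinomialTerm_mul (a q c w : ℂ) (k : ℕ) :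
    qBinomialTerm a q (c * w) k = c ^ k * qBinomialTerm a q w k := by
  rw [qBinomialTerm, qBinomialTerm, mul_pow]
  ring

theorem summable_norm_qBinomialTerm (a : ℂ) (hq : ‖q‖ < 1) (hw : ‖w‖ < 1) :
    Summable fun k ↦ ‖qBinomialTerm a q w k‖ := by
  have hq0 : Tendsto (q ^ ·) atTop (𝓝 0) := tendsto_pow_atTop_nhds_zero_of_norm_lt_one hq
  have hρ : Tendsto (fun k ↦ (1 - a * q ^ k) / (1 - q ^ (k + 1)) * w) atTop (𝓝 w) := by
    have hnum := (hq0.const_mul a).const_sub 1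
    have hden := ((tendsto_add_atTop_iff_nat 1).mpr hq0).const_sub 1
    simpa using (hnum.div hden (by simp)).mul_const w
  exact summable_norm_of_ratio_tendsto (qBinomialTerm_succ a q w) hρ hw

theorem summable_qBinomialTerm (a : ℂ) (hq : ‖q‖ < 1) (hw : ‖w‖ < 1) :
    Summable (qBinomialTerm a q w) :=
  (summable_norm_qBinomialTerm a hq hw).of_norm

theorem one_sub_pow_mul_qBinomialTerm_succ (a w : ℂ) (hq : ‖q‖ < 1) (k : ℕ) :
    (1 - q ^ (k + 1)) * qBinomialTerm a q w (k + 1) =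
      w * ((1 - a * q ^ k) * qBinomialTerm a q w k) := by
  rw [qBinomialTerm_succ]
  field_simp [one_sub_pow_ne_zero hq k.succ_ne_zero]

theorem one_sub_mul_qBinomialSeries (hq : ‖q‖ < 1) (hw : ‖w‖ < 1) :
    (1 - w) * qBinomialSeries a q w = (1 - a * w) * qBinomialSeries a q (q * w) := by
  set t := qBinomialTerm a q w
  have hqw : qBinomialSeries a q (q * w) = ∑' k, q ^ k * t k :=
    tsum_congr (qBinomialTerm_mul a q q w)
  have ht : Summable t := summable_qBinomialTerm a hq hw
  have htq : Summable fun k ↦ q ^ k * t k :=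
    (summable_qBinomialTerm a hq (w := q * w)
      (by simpa only [pow_one, mul_comm w] using norm_mul_pow_lt_one hq.le hw 1)).congr
      (qBinomialTerm_mul a q q w)
  have hdiff : qBinomialSeries a q w - qBinomialSeries a q (q * w) = ∑' k, (1 - q ^ k) * t k := by
    rw [hqw, qBinomialSeries, ← ht.tsum_sub htq]
    exact tsum_congr fun k ↦ by ring
  have hdiff' : w * qBinomialSeries a q w - a * w * qBinomialSeries a q (q * w) =
      ∑' k, w * ((1 - a * q ^ k) * t k) := by
    rw [hqw, qBinomialSeries, ← tsum_mul_left, ← tsum_mul_left,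
      ← (ht.mul_left w).tsum_sub (htq.mul_left (a * w))]
    exact tsum_congr fun k ↦ by ring
  -- Shifting the index turns `(1 - qᵏ) tₖ` into `w (1 - a qᵏ) tₖ`.
  have hshift : ∑' k, (1 - q ^ k) * t k = ∑' k, w * ((1 - a * q ^ k) * t k) := by
    rw [((ht.sub htq).congr fun k ↦ by ring).tsum_eq_zero_add]
    simp only [pow_zero, sub_self, zero_mul, zero_add]
    exact tsum_congr (one_sub_pow_mul_qBinomialTerm_succ a w hq)
  linear_combination hdiff - hdiff' + hshift

theorem qPoch_mul_qBinomialSeries (hq : ‖q‖ < 1) (hw : ‖w‖ < 1) (n : ℕ) :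
    qPoch w q n * qBinomialSeries a q w = qPoch (a * w) q n * qBinomialSeries a q (q ^ n * w) := by
  induction n with
  | zero => simp [qPoch_zero]
  | succ n ih =>
    have hfe := one_sub_mul_qBinomialSeries (a := a) hq (by
      simpa only [mul_comm w] using norm_mul_pow_lt_one hq.le hw n)
    rw [qPoch_succ, qPoch_succ, pow_succ', mul_assoc q]
    linear_combination (1 - w * q ^ n) * ih + qPoch (a * w) q n * hfe

theorem tendsto_qBinomialSeries_pow_mul (a : ℂ) (hq : ‖q‖ < 1) (hw : ‖w‖ < 1) :
    Tendsto (fun n ↦ qBinomialSeries a q (q ^ n * w)) atTop (𝓝 1) := by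
  have hq0 : Tendsto (q ^ ·) atTop (𝓝 0) := tendsto_pow_atTop_nhds_zero_of_norm_lt_one hq
  have hG0 : ∑' k, qBinomialTerm a q (0 * w) k = 1 := by
    rw [tsum_eq_single 0 fun k hk ↦ by rw [qBinomialTerm_mul, zero_pow hk, zero_mul],
      qBinomialTerm_zero]
  rw [← hG0]
  refine tendsto_tsum_of_dominated_convergence (summable_norm_qBinomialTerm a hq hw)
    (fun k ↦ ?_) (Eventually.of_forall fun n k ↦ ?_)
  · simpa only [qBinomialTerm_mul] using (hq0.pow k).mul_const (qBinomialTerm a q w k)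
  · rw [qBinomialTerm_mul, norm_mul, ← pow_mul, norm_pow]
    exact mul_le_of_le_one_left (norm_nonneg _) (pow_le_one₀ (norm_nonneg q) hq.le)

end QBinomialSeries

theorem q_binomial (a z q : ℂ) (hq : ‖q‖ < 1) (hz : ‖z‖ < 1) :
    ∑' k : ℕ, qPoch a q k / qPoch q q k * z ^ k = qPochInf (a * z) q / qPochInf z q := by
  change qBinomialSeries a q z = _
  have hlim := tendsto_nhds_unique
    (((tendsto_qPoch_qPochInf z hq).mul_const _).congr (qPoch_mul_qBinomialSeries hq hz))
    ((tendsto_qPoch_qPochInf (a * z) hq).mul (tendsto_qBinomialSeries_pow_mul a hq hz))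
  rw [mul_one, mul_comm] at hlim
  exact eq_div_of_mul_eq (qPochInf_ne_zero hq hz) hlim
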